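/- arXiv:0910.2340 — 5 statements merged into one kernel-verified Lean document; each statement's English description precedes it below -/
import Mathlib

section
/- Under the collaborative recommendation model, P(L_n = ∅) = E[Π_{i∈R_n} α_ni], and this quantity converges to 0 as n → ∞. -/
open MeasureTheory ProbabilityTheory Finset Filter
open scoped BigOperators Topology

noncomputable section

namespace Collab

/-- Discrete measurable structure on finsets (used for the random sets of rated items). -/
instance instMeasFinset (α : Type*) : MeasurableSpace (Finset α) := ⊤

/-- Vectors of ratings. -/
abbrev Vec (d : ℕ) := Fin d → ℝ

/-- The Euclidean norm on `Fin d → ℝ`. -/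
def nrm {d : ℕ} (x : Vec d) : ℝ := Real.sqrt (∑ j, x j ^ 2)

/-- The cosine-type similarity `S̄`: the sum is restricted to the set
`J = {j : x j ≠ 0 ∧ x' j ≠ 0}`; the convention `S̄ = 0` when `J = ∅` is automatic
from `0 / 0 = 0`. -/
def simBar {d : ℕ} (x x' : Vec d) : ℝ :=
  (∑ j ∈ Finset.univ.filter (fun j => x j ≠ 0 ∧ x' j ≠ 0), x j * x' j) /
    (Real.sqrt (∑ j ∈ Finset.univ.filter (fun j => x j ≠ 0 ∧ x' j ≠ 0), x j ^ 2) *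
      Real.sqrt (∑ j ∈ Finset.univ.filter (fun j => x j ≠ 0 ∧ x' j ≠ 0), x' j ^ 2))

/-- Masking a vector by a set of coordinates: coordinates outside `m` are set to `0`. -/
def mask {d : ℕ} (m : Finset (Fin d)) (x : Vec d) : Vec d := fun j => if j ∈ m then x j else 0

/-- `i` is among the `k` points most similar to the target among the points indexed by `Rs`,
for the similarity `sim`, ties being broken by smaller index: the number of indices
`j ∈ Rs` that are strictly more similar than `i`, or as similar with `j ≤ i`
(this count includes `i` itself), is at most `k`. -/
def amongMS (sim : ℕ → ℝ) (Rs : Finset ℕ) (k i : ℕ) : Prop :=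
  i ∈ Rs ∧ (Rs.filter (fun j => sim i < sim j ∨ (sim j = sim i ∧ j ≤ i))).card ≤ k

/-- Index type for the mutually independent ingredients of the model: the new user's pair
`(X, Y)`, the database pairs `(X_i, Y_i)`, the preference sequences `(M_i^n)_{n ≥ 1}`,
and the random set `M`. -/
inductive Idx where
  | newuser : Idx
  | user (i : ℕ) : Idx
  | mseq (i : ℕ) : Idx
  | m : Idx

/-- Codomains of the independent ingredients. -/
def idxType (d : ℕ) : Idx → Type
  | .newuser => Vec d × ℝ
  | .user _ => Vec d × ℝ
  | .mseq _ => ℕ → Finset (Fin d)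
  | .m => Finset (Fin d)

instance (d : ℕ) : ∀ x, MeasurableSpace (idxType d x)
  | .newuser => inferInstanceAs (MeasurableSpace (Vec d × ℝ))
  | .user _ => inferInstanceAs (MeasurableSpace (Vec d × ℝ))
  | .mseq _ => inferInstanceAs (MeasurableSpace (ℕ → Finset (Fin d)))
  | .m => inferInstanceAs (MeasurableSpace (Finset (Fin d)))

variable {d : ℕ} {Ω : Type} [MeasurableSpace Ω]

/-- The family of independent ingredients of the model. -/
def fam (X : Ω → Vec d) (Y : Ω → ℝ) (M : Ω → Finset (Fin d))
    (Xi : ℕ → Ω → Vec d) (Yi : ℕ → Ω → ℝ) (Mi : ℕ → ℕ → Ω → Finset (Fin d)) :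
    ∀ x : Idx, Ω → idxType d x
  | .newuser => fun ω => (X ω, Y ω)
  | .user i => fun ω => (Xi i ω, Yi i ω)
  | .mseq i => fun ω n => Mi i (n + 1) ω
  | .m => M

/-- The sequential stochastic model for collaborative recommendation.  `(X, Y)` is the new
user, `M` the set of items he has rated, `(Xi i, Yi i)` the database users,
`Mi i n = M_i^n` the set of items rated by user `i` at his `n`-th time period (`n ≥ 1`),
`Mgen n = M^n` the generic preference sequence and `R n = 𝓡_n` the set of users having
rated the item of interest at time `n`. -/
structure Model (d : ℕ) (s : ℝ) {Ω : Type} [MeasurableSpace Ω] (P : Measure Ω)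
    (X : Ω → Vec d) (Y : Ω → ℝ) (M : Ω → Finset (Fin d))
    (Xi : ℕ → Ω → Vec d) (Yi : ℕ → Ω → ℝ)
    (Mi : ℕ → ℕ → Ω → Finset (Fin d)) (Mgen : ℕ → Ω → Finset (Fin d))
    (R : ℕ → Ω → Finset ℕ) : Prop where
  isProb : IsProbabilityMeasure P
  dim_pos : 1 ≤ d
  s_gt_one : 1 < s
  meas_X : Measurable X
  meas_Y : Measurable Y
  meas_M : Measurable M
  meas_Xi : ∀ i, Measurable (Xi i)
  meas_Yi : ∀ i, Measurable (Yi i)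
  meas_Mi : ∀ i n, Measurable (Mi i n)
  meas_Mgen : ∀ n, Measurable (Mgen n)
  meas_R : ∀ n, Measurable (R n)
  X_range : ∀ ω j, X ω j ∈ Set.Icc (1 : ℝ) s
  Y_range : ∀ ω, Y ω ∈ Set.Icc (1 : ℝ) s
  M_ne : ∀ ω, (M ω).Nonempty
  Mi_ne : ∀ i n ω, 1 ≤ n → (Mi i n ω).Nonempty
  Mi_mono : ∀ i n ω, Mi i n ω ⊆ Mi i (n + 1) ω
  Mgen_ne : ∀ n ω, 1 ≤ n → (Mgen n ω).Nonempty
  Mgen_mono : ∀ n ω, Mgen n ω ⊆ Mgen (n + 1) ω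
  /-- the database pairs are distributed as the new user's pair -/
  ident_user : ∀ i, 1 ≤ i → P.map (fun ω => (Xi i ω, Yi i ω)) = P.map (fun ω => (X ω, Y ω))
  /-- every preference sequence is distributed as the generic sequence `(M^n)_{n ≥ 1}` -/
  ident_seq : ∀ i, 1 ≤ i →
    P.map (fun ω => (fun n => Mi i (n + 1) ω)) = P.map (fun ω => (fun n => Mgen (n + 1) ω))
  /-- `M^1` is distributed as `M` -/
  ident_M1 : P.map (Mgen 1) = P.map M
  /-- a.s. there is a (random) time `n₀` at which all `d` items are rated -/
  Mgen_full : ∀ᵐ ω ∂P, ∃ n, 1 ≤ n ∧ Mgen n ω = Finset.univ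
  R_sub : ∀ n ω, R n ω ⊆ Finset.Icc 1 n
  R_ne : ∀ n ω, 1 ≤ n → (R n ω).Nonempty
  R_mono : ∀ n ω, R n ω ⊆ R (n + 1) ω
  /-- mutual independence of the new user, the database pairs, the preference sequences
  and `M` -/
  indep : iIndepFun (fam X Y M Xi Yi Mi) P
  /-- `𝓡_n` is independent of `M` and of the preference sequences -/
  indep_R : ∀ n, IndepFun (R n) (fun ω => (M ω, fun i m => Mi i (m + 1) ω)) P

variable (P : Measure Ω)

/-- `X* = masked version of X`. -/
def XstarF (M : Ω → Finset (Fin d)) (X : Ω → Vec d) (ω : Ω) : Vec d := mask (M ω) (X ω)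

/-- `X_i^{(n)}`: the coordinates of `X_i` corated (at time `n`) by user `i` and the new user. -/
def XinF (M : Ω → Finset (Fin d)) (Xi : ℕ → Ω → Vec d) (Mi : ℕ → ℕ → Ω → Finset (Fin d))
    (n i : ℕ) (ω : Ω) : Vec d := mask (Mi i (n + 1 - i) ω ∩ M ω) (Xi i ω)

/-- `X_i^*`: the coordinates of `X_i` rated by the new user. -/
def XistarF (M : Ω → Finset (Fin d)) (Xi : ℕ → Ω → Vec d) (i : ℕ) (ω : Ω) : Vec d :=
  mask (M ω) (Xi i ω)

/-- The penalty `p_i^{(n)} = |M_i^{n+1-i} ∩ M| / |M|`. -/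
def pinF (M : Ω → Finset (Fin d)) (Mi : ℕ → ℕ → Ω → Finset (Fin d)) (n i : ℕ) (ω : Ω) : ℝ :=
  ((Mi i (n + 1 - i) ω ∩ M ω).card : ℝ) / ((M ω).card : ℝ)

/-- The penalized similarity `S(X*, X_i^{(n)}) = p_i^{(n)} S̄(X*, X_i^{(n)})`. -/
def simS (X : Ω → Vec d) (M : Ω → Finset (Fin d)) (Xi : ℕ → Ω → Vec d)
    (Mi : ℕ → ℕ → Ω → Finset (Fin d)) (n i : ℕ) (ω : Ω) : ℝ :=
  pinF M Mi n i ω * simBar (XstarF M X ω) (XinF M Xi Mi n i ω)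

open scoped Classical in
/-- The `k_n`-NN weights `W_{ni}(X*)`, with the conventions `W_{ni} = 0` when
`|𝓡_n| < k_n` or `X_i^{(n)} = 0`. -/
def W (X : Ω → Vec d) (M : Ω → Finset (Fin d)) (Xi : ℕ → Ω → Vec d)
    (Mi : ℕ → ℕ → Ω → Finset (Fin d)) (R : ℕ → Ω → Finset ℕ) (k : ℕ → ℕ)
    (n i : ℕ) (ω : Ω) : ℝ :=
  if k n ≤ (R n ω).card ∧ XinF M Xi Mi n i ω ≠ 0 ∧
      amongMS (fun j => simS X M Xi Mi n j ω) (R n ω) (k n) i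
    then 1 / (k n : ℝ) else 0

/-- The cosine-type `k_n`-NN regression estimate `η_n(X*)`
(the convention `0 ⬝ ∞ = 0` is automatic since `y / 0 = 0` and `0 * y = 0` in Lean). -/
def etan (X : Ω → Vec d) (M : Ω → Finset (Fin d)) (Xi : ℕ → Ω → Vec d) (Yi : ℕ → Ω → ℝ)
    (Mi : ℕ → ℕ → Ω → Finset (Fin d)) (R : ℕ → Ω → Finset ℕ) (k : ℕ → ℕ)
    (n : ℕ) (ω : Ω) : ℝ :=
  nrm (XstarF M X ω) *
    ∑ i ∈ R n ω, W X M Xi Mi R k n i ω * (Yi i ω / nrm (XinF M Xi Mi n i ω))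

/-- The regression function evaluated at the new user: `η(X*) = E[Y | X*]`. -/
def etaX (X : Ω → Vec d) (Y : Ω → ℝ) (M : Ω → Finset (Fin d)) : Ω → ℝ :=
  P[Y|MeasurableSpace.comap (XstarF M X) inferInstance]

/-- `φ(X*) = E[Y / ‖X*‖ | X*/‖X*‖]`. -/
def phiX (X : Ω → Vec d) (Y : Ω → ℝ) (M : Ω → Finset (Fin d)) : Ω → ℝ :=
  P[fun ω => Y ω / nrm (XstarF M X ω)|MeasurableSpace.comap
    (fun ω => (nrm (XstarF M X ω))⁻¹ • XstarF M X ω) inferInstance]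

/-- `α_{ni} = P(M^{n+1-i} ⊉ M | M)`: by independence of `M` and the generic sequence, this
is the function of `M` given by `m ↦ P(M^{n+1-i} ⊉ m)`. -/
def alphaF (M : Ω → Finset (Fin d)) (Mgen : ℕ → Ω → Finset (Fin d)) (n i : ℕ) (ω : Ω) : ℝ :=
  (P {ω' | ¬ M ω ⊆ Mgen (n + 1 - i) ω'}).toReal

open scoped Classical in
/-- `L_n = {i ∈ 𝓡_n : T_i ≤ n}` where `T_i = min{k ≥ i : M ⊆ M_i^{k+1-i}}`. -/
def Lset (M : Ω → Finset (Fin d)) (Mi : ℕ → ℕ → Ω → Finset (Fin d)) (R : ℕ → Ω → Finset ℕ)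
    (n : ℕ) (ω : Ω) : Finset ℕ :=
  (R n ω).filter (fun i => ∃ kk, i ≤ kk ∧ kk ≤ n ∧ M ω ⊆ Mi i (kk + 1 - i) ω)

open scoped Classical in
/-- The Euclidean nearest neighbor weights `W*_{ni}(X*)` over the set `L_n`, computed with
the similarity `S̄(X*, X_i^*)`. -/
def Wstar (X : Ω → Vec d) (M : Ω → Finset (Fin d)) (Xi : ℕ → Ω → Vec d)
    (Mi : ℕ → ℕ → Ω → Finset (Fin d)) (R : ℕ → Ω → Finset ℕ) (k : ℕ → ℕ)
    (n i : ℕ) (ω : Ω) : ℝ :=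
  if amongMS (fun j => simBar (XstarF M X ω) (XistarF M Xi j ω)) (Lset M Mi R n ω) (k n) i
    then 1 / (k n : ℝ) else 0


/-!
On the cell `{R_n = r, M = m}` the set `L_n` is empty iff no user `i ∈ r` has
`m ⊆ M_i^{n+1-i}` (the sequences `M_i^k` are nondecreasing, so `T_i ≤ n` is decided at time
`n`). Independence of `R_n` from the preference data, and mutual independence of `M` and the
sequences `M_i`, factor the probability of this event as
`P(R_n = r) P(M = m) ∏_{i ∈ r} P(M^{n+1-i} ⊉ m)`; summing over the finitely many cells gives
`E[∏_{i ∈ R_n} α_ni]`. Since user `1` belongs to every `R_n`, the product is at most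
`P(M^n ≠ {1, …, d})`, which tends to `0` because `M^n` is nondecreasing and almost surely
eventually full.
-/

instance (α : Type*) : DiscreteMeasurableSpace (Finset α) :=
  ⟨fun _ => MeasurableSpace.measurableSet_top⟩

section FiniteRange

variable {Ω α : Type*} [MeasurableSpace Ω] {μ : Measure Ω} {V : Ω → α} {Q : Finset α}

theorem measure_eq_sum_measure_preimage_singleton_inter (hV : ∀ ω, V ω ∈ Q)
    (hVm : ∀ q ∈ Q, MeasurableSet (V ⁻¹' {q})) (S : Set Ω) :
    μ S = ∑ q ∈ Q, μ (V ⁻¹' {q} ∩ S) := by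
  have hcover : V ⁻¹' Q = Set.univ := Set.eq_univ_of_forall hV
  calc μ S = μ.restrict S (V ⁻¹' Q) := by rw [hcover, Measure.restrict_apply_univ]
    _ = ∑ q ∈ Q, μ.restrict S (V ⁻¹' {q}) := (sum_measure_preimage_singleton Q hVm).symm
    _ = ∑ q ∈ Q, μ (V ⁻¹' {q} ∩ S) :=
      Finset.sum_congr rfl fun q hq => Measure.restrict_apply (hVm q hq)

theorem integral_comp_eq_sum [IsFiniteMeasure μ] (hV : ∀ ω, V ω ∈ Q)
    (hVm : ∀ q ∈ Q, MeasurableSet (V ⁻¹' {q})) (h : α → ℝ) :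
    ∫ ω, h (V ω) ∂μ = ∑ q ∈ Q, (μ (V ⁻¹' {q})).toReal * h q := by
  have hsplit : (fun ω => h (V ω)) =
      fun ω => ∑ q ∈ Q, (V ⁻¹' {q}).indicator (fun _ => h q) ω := by
    funext ω
    rw [Finset.sum_eq_single_of_mem (f := fun q => (V ⁻¹' {q}).indicator (fun _ => h q) ω)
      (V ω) (hV ω) fun q _ hq => Set.indicator_of_notMem (Ne.symm hq) _]
    exact (Set.indicator_of_mem rfl _).symm
  rw [hsplit, integral_finsetSum _ fun q hq => (integrable_const _).indicator (hVm q hq)]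
  exact Finset.sum_congr rfl fun q hq => by
    rw [integral_indicator_const _ (hVm q hq), smul_eq_mul, measureReal_def]

end FiniteRange

/-- The random variable of which `Model.indep_R` makes each `R n` independent. -/
def prefs (M : Ω → Finset (Fin d)) (Mi : ℕ → ℕ → Ω → Finset (Fin d)) (ω : Ω) :
    Finset (Fin d) × (ℕ → ℕ → Finset (Fin d)) :=
  (M ω, fun i k => Mi i (k + 1) ω)

namespace Model

variable {s : ℝ} {P : Measure Ω} {X : Ω → Vec d} {Y : Ω → ℝ} {M : Ω → Finset (Fin d)}
  {Xi : ℕ → Ω → Vec d} {Yi : ℕ → Ω → ℝ} {Mi : ℕ → ℕ → Ω → Finset (Fin d)}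
  {Mgen : ℕ → Ω → Finset (Fin d)} {R : ℕ → Ω → Finset ℕ}

theorem one_mem_R (hmodel : Model d s P X Y M Xi Yi Mi Mgen R) {n : ℕ} (hn : 1 ≤ n)
    (ω : Ω) : 1 ∈ R n ω := by
  obtain ⟨j, hj⟩ := hmodel.R_ne 1 ω le_rfl
  have hj1 : j = 1 := by simpa using hmodel.R_sub 1 ω hj
  exact monotone_nat_of_le_succ (hmodel.R_mono · ω) hn (hj1 ▸ hj)

theorem Lset_eq_empty_iff (hmodel : Model d s P X Y M Xi Yi Mi Mgen R) (n : ℕ) (ω : Ω) :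
    Lset M Mi R n ω = ∅ ↔ ∀ i ∈ R n ω, ¬ M ω ⊆ Mi i (n + 1 - i) ω := by
  classical
  rw [Lset, Finset.filter_eq_empty_iff]
  refine ⟨fun h i hi hsub => h hi ⟨n, (mem_Icc.1 (hmodel.R_sub n ω hi)).2, le_rfl, hsub⟩, ?_⟩
  rintro h i hi ⟨k, -, hkn, hsub⟩
  exact h i hi (hsub.trans (monotone_nat_of_le_succ (hmodel.Mi_mono i · ω) (by omega)))

theorem measure_not_subset_Mi (hmodel : Model d s P X Y M Xi Yi Mi Mgen R) {i t : ℕ}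
    (hi : 1 ≤ i) (ht : 1 ≤ t) (m : Finset (Fin d)) :
    P {ω | ¬ m ⊆ Mi i t ω} = P {ω | ¬ m ⊆ Mgen t ω} := by
  obtain ⟨k, rfl⟩ := Nat.exists_eq_add_of_le' ht
  have hT : MeasurableSet {g : ℕ → Finset (Fin d) | ¬ m ⊆ g k} := by measurability
  have hmap := congrArg (fun ν : Measure (ℕ → Finset (Fin d)) => ν {g | ¬ m ⊆ g k})
    (hmodel.ident_seq i hi)
  rwa [Measure.map_apply (measurable_pi_lambda _ fun k => hmodel.meas_Mi i (k + 1)) hT,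
    Measure.map_apply (measurable_pi_lambda _ fun k => hmodel.meas_Mgen (k + 1)) hT] at hmap

theorem measure_M_preimage_inter_biInter (hmodel : Model d s P X Y M Xi Yi Mi Mgen R)
    (m : Finset (Fin d)) (r : Finset ℕ) (t : ℕ → ℕ) (ht : ∀ i ∈ r, 1 ≤ t i) :
    P (M ⁻¹' {m} ∩ ⋂ i ∈ r, {ω | ¬ m ⊆ Mi i (t i) ω}) =
      P (M ⁻¹' {m}) * ∏ i ∈ r, P {ω | ¬ m ⊆ Mi i (t i) ω} := by
  classical
  let E : Idx → Set Ω := fun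
    | .m => M ⁻¹' {m}
    | .mseq i => {ω | ¬ m ⊆ Mi i (t i) ω}
    | _ => Set.univ
  have hE : ∀ x ∈ insert Idx.m (r.image Idx.mseq),
      MeasurableSet[MeasurableSpace.comap (fam X Y M Xi Yi Mi x) inferInstance] (E x) := by
    simp only [mem_insert, mem_image]
    rintro x (rfl | ⟨i, hi, rfl⟩)
    · exact ⟨{m}, MeasurableSpace.measurableSet_top, rfl⟩
    · refine ⟨{g | ¬ m ⊆ g (t i - 1)}, by measurability, ?_⟩
      ext ω
      show ¬ m ⊆ Mi i (t i - 1 + 1) ω ↔ _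
      rw [Nat.sub_add_cancel (ht i hi)]
      rfl
  have hindep := hmodel.indep.meas_biInter hE
  rwa [Finset.set_biInter_insert, Finset.set_biInter_finset_image, Finset.prod_insert (by simp),
    Finset.prod_image (by simp)] at hindep

theorem measure_R_preimage_inter (hmodel : Model d s P X Y M Xi Yi Mi Mgen R) (n : ℕ)
    (r : Finset ℕ) {A : Set Ω}
    (hA : MeasurableSet[MeasurableSpace.comap (prefs M Mi) inferInstance] A) :
    P (R n ⁻¹' {r} ∩ A) = P (R n ⁻¹' {r}) * P A :=
  (hmodel.indep_R n).meas_inter ⟨{r}, MeasurableSpace.measurableSet_top, rfl⟩ hA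

theorem measure_preimage_R_M (hmodel : Model d s P X Y M Xi Yi Mi Mgen R) (n : ℕ)
    (r : Finset ℕ) (m : Finset (Fin d)) :
    P ((fun ω => (R n ω, M ω)) ⁻¹' {(r, m)}) = P (R n ⁻¹' {r}) * P (M ⁻¹' {m}) := by
  rw [← Set.singleton_prod_singleton, Set.mk_preimage_prod]
  exact hmodel.measure_R_preimage_inter n r
    ((measurable_fst.comp (comap_measurable (prefs M Mi)))
      (MeasurableSet.of_discrete (s := {m})))

theorem measure_preimage_R_M_inter_Lset_eq_empty (hmodel : Model d s P X Y M Xi Yi Mi Mgen R)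
    {n : ℕ} {r : Finset ℕ} (hr : r ⊆ Icc 1 n) (m : Finset (Fin d)) :
    P ((fun ω => (R n ω, M ω)) ⁻¹' {(r, m)} ∩ {ω | Lset M Mi R n ω = ∅}) =
      P (R n ⁻¹' {r}) * (P (M ⁻¹' {m}) * ∏ i ∈ r, P {ω | ¬ m ⊆ Mgen (n + 1 - i) ω}) := by
  have hcell : (fun ω => (R n ω, M ω)) ⁻¹' {(r, m)} ∩ {ω | Lset M Mi R n ω = ∅} =
      R n ⁻¹' {r} ∩ (M ⁻¹' {m} ∩ ⋂ i ∈ r, {ω | ¬ m ⊆ Mi i (n + 1 - i) ω}) := by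
    ext ω
    simp only [Set.mem_inter_iff, Set.mem_preimage, Set.mem_singleton_iff, Prod.mk.injEq,
      Set.mem_ofPred_eq, hmodel.Lset_eq_empty_iff, Set.mem_iInter]
    constructor
    · rintro ⟨⟨rfl, rfl⟩, h⟩
      exact ⟨rfl, rfl, h⟩
    · rintro ⟨rfl, rfl, h⟩
      exact ⟨⟨rfl, rfl⟩, h⟩
  have hpos : ∀ i ∈ r, 1 ≤ i ∧ 1 ≤ n + 1 - i := fun i hi => by
    have := mem_Icc.1 (hr hi)
    omega
  have hMi : ∀ i ∈ r, Measurable[MeasurableSpace.comap (prefs M Mi) inferInstance]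
      (Mi i (n + 1 - i)) := fun i hi => by
    obtain ⟨k, hk⟩ := Nat.exists_eq_add_of_le' (hpos i hi).2
    rw [hk]
    exact (show Measurable fun q : Finset (Fin d) × (ℕ → ℕ → Finset (Fin d)) => q.2 i k
      by fun_prop).comp (comap_measurable _)
  have hmeas : MeasurableSet[MeasurableSpace.comap (prefs M Mi) inferInstance]
      (M ⁻¹' {m} ∩ ⋂ i ∈ r, {ω | ¬ m ⊆ Mi i (n + 1 - i) ω}) :=
    ((measurable_fst.comp (comap_measurable _)) (MeasurableSet.of_discrete (s := {m}))).inter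
      (MeasurableSet.biInter (Set.to_countable _) fun i hi =>
        hMi i hi (MeasurableSet.of_discrete (s := {t | ¬ m ⊆ t})))
  rw [hcell, hmodel.measure_R_preimage_inter n r hmeas,
    hmodel.measure_M_preimage_inter_biInter m r _ fun i hi => (hpos i hi).2]
  congr 2
  exact Finset.prod_congr rfl fun i hi =>
    hmodel.measure_not_subset_Mi (hpos i hi).1 (hpos i hi).2 m

theorem toReal_measure_Lset_eq_empty (hmodel : Model d s P X Y M Xi Yi Mi Mgen R) (n : ℕ) :
    (P {ω | Lset M Mi R n ω = ∅}).toReal = ∫ ω, ∏ i ∈ R n ω, alphaF P M Mgen n i ω ∂P := by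
  have := hmodel.isProb
  set Q := (Icc 1 n).powerset ×ˢ (univ : Finset (Finset (Fin d)))
  have hV : ∀ ω, (R n ω, M ω) ∈ Q := fun ω => by simpa [Q] using hmodel.R_sub n ω
  have hVm : ∀ q ∈ Q, MeasurableSet ((fun ω => (R n ω, M ω)) ⁻¹' {q}) := fun q _ =>
    (hmodel.meas_R n).prodMk hmodel.meas_M (measurableSet_singleton q)
  have hint : ∫ ω, ∏ i ∈ R n ω, alphaF P M Mgen n i ω ∂P = ∑ q ∈ Q,
      (P ((fun ω => (R n ω, M ω)) ⁻¹' {q})).toReal *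
        ∏ i ∈ q.1, (P {ω | ¬ q.2 ⊆ Mgen (n + 1 - i) ω}).toReal :=
    integral_comp_eq_sum (μ := P) hV hVm
      fun q => ∏ i ∈ q.1, (P {ω | ¬ q.2 ⊆ Mgen (n + 1 - i) ω}).toReal
  rw [measure_eq_sum_measure_preimage_singleton_inter hV hVm,
    ENNReal.toReal_sum fun _ _ => measure_ne_top _ _, hint]
  refine Finset.sum_congr rfl fun ⟨r, m⟩ hq => ?_
  rw [hmodel.measure_preimage_R_M_inter_Lset_eq_empty (mem_powerset.1 (mem_product.1 hq).1) m,
    hmodel.measure_preimage_R_M n r m]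
  simp only [ENNReal.toReal_mul, ENNReal.toReal_prod]
  ring

theorem tendsto_measure_Mgen_ne_univ (hmodel : Model d s P X Y M Xi Yi Mi Mgen R) :
    Tendsto (fun n => P {ω | Mgen n ω ≠ univ}) atTop (𝓝 0) := by
  have := hmodel.isProb
  have hanti : Antitone fun n => {ω | Mgen n ω ≠ univ} := fun a b hab ω hb ha =>
    hb (univ_subset_iff.1 (ha ▸ monotone_nat_of_le_succ (hmodel.Mgen_mono · ω) hab))
  have hnull : P (⋂ n, {ω | Mgen n ω ≠ univ}) = 0 := by
    refine measure_mono_null (fun ω hω => ?_) (ae_iff.1 hmodel.Mgen_full)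
    rintro ⟨n, -, hn⟩
    exact Set.mem_iInter.1 hω n hn
  have hlim := tendsto_measure_iInter_atTop (μ := P)
    (s := fun n => {ω | Mgen n ω ≠ univ})
    (fun n => (hmodel.meas_Mgen n (MeasurableSet.of_discrete (s := {univ}ᶜ))).nullMeasurableSet)
    hanti ⟨0, measure_ne_top _ _⟩
  rwa [hnull] at hlim

theorem prod_alphaF_le (hmodel : Model d s P X Y M Xi Yi Mi Mgen R) {n : ℕ} (hn : 1 ≤ n)
    (ω : Ω) : ∏ i ∈ R n ω, alphaF P M Mgen n i ω ≤ (P {ω | Mgen n ω ≠ univ}).toReal := by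
  have := hmodel.isProb
  have hα : ∀ i, 0 ≤ alphaF P M Mgen n i ω ∧ alphaF P M Mgen n i ω ≤ 1 := fun i =>
    ⟨ENNReal.toReal_nonneg, measureReal_le_one⟩
  calc ∏ i ∈ R n ω, alphaF P M Mgen n i ω ≤ ∏ i ∈ {1}, alphaF P M Mgen n i ω :=
        prod_le_prod_of_subset_of_le_one (singleton_subset_iff.2 (hmodel.one_mem_R hn ω))
          (fun i _ => (hα i).1) fun i _ _ => (hα i).2
    _ = (P {ω' | ¬ M ω ⊆ Mgen n ω'}).toReal := by simp [alphaF]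
    _ ≤ (P {ω | Mgen n ω ≠ univ}).toReal :=
        ENNReal.toReal_mono (measure_ne_top _ _) (measure_mono fun ω' h huniv =>
          h (huniv ▸ subset_univ _))

theorem tendsto_integral_prod_alphaF (hmodel : Model d s P X Y M Xi Yi Mi Mgen R) :
    Tendsto (fun n => ∫ ω, ∏ i ∈ R n ω, alphaF P M Mgen n i ω ∂P) atTop (𝓝 0) := by
  have := hmodel.isProb
  refine tendsto_of_tendsto_of_tendsto_of_le_of_le' tendsto_const_nhds
    ((ENNReal.tendsto_toReal ENNReal.zero_ne_top).comp hmodel.tendsto_measure_Mgen_ne_univ)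
    (Eventually.of_forall fun n => integral_nonneg fun ω =>
      prod_nonneg fun i _ => ENNReal.toReal_nonneg) ?_
  filter_upwards [eventually_ge_atTop 1] with n hn
  refine (integral_mono_of_nonneg
    (Eventually.of_forall fun ω => prod_nonneg fun i _ => ENNReal.toReal_nonneg)
    (integrable_const _) (Eventually.of_forall (hmodel.prod_alphaF_le hn))).trans_eq ?_
  simp

end Model

/-- **Lemma 6.1.** `P(L_n = ∅) = E[∏_(i ∈ 𝓡_n) α_ni] → 0`. -/
theorem statement4
    {d : ℕ} {s : ℝ} {Ω : Type} [MeasurableSpace Ω] {P : Measure Ω}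
    {X : Ω → Vec d} {Y : Ω → ℝ} {M : Ω → Finset (Fin d)}
    {Xi : ℕ → Ω → Vec d} {Yi : ℕ → Ω → ℝ}
    {Mi : ℕ → ℕ → Ω → Finset (Fin d)} {Mgen : ℕ → Ω → Finset (Fin d)}
    {R : ℕ → Ω → Finset ℕ}
    (hmodel : Model d s P X Y M Xi Yi Mi Mgen R) :
    (∀ n, 1 ≤ n →
      (P {ω | Lset M Mi R n ω = ∅}).toReal =
        ∫ ω, ∏ i ∈ R n ω, alphaF P M Mgen n i ω ∂P) ∧
    Filter.Tendsto (fun n => ∫ ω, ∏ i ∈ R n ω, alphaF P M Mgen n i ω ∂P)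
      Filter.atTop (nhds 0) :=
  ⟨fun n _ => hmodel.toReal_measure_Lset_eq_empty n, hmodel.tendsto_integral_prod_alphaF⟩

end Collab
end
end

section
/- Under the collaborative recommendation model, E[ (1/|L_n|) 1_{L_n ≠ ∅} ] ≤ 2 E[ 1/|R_n| ] + 2 E[ (1/|R_n|) Σ_{i∈R_n} E[α_ni] ]. -/
open MeasureTheory ProbabilityTheory Finset Filter
open scoped BigOperators Topology

noncomputable section

/-! Write `a = |L_n| ≥ 1` (when `L_n ≠ ∅`) and `b = |R_n \ L_n|`; then `1/a ≤ 2(1 + b)/(a + b)`,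
and every `i ∈ R_n \ L_n` has `M ⊄ M_i^{n+1-i}`. Hence `(1/|L_n|) 1_{L_n ≠ ∅}` is at most
`2/|R_n| + (2/|R_n|) ∑_{i ∈ R_n} 1{M ⊄ M_i^{n+1-i}}`. In expectation the indicator may be replaced
by its mean because `R_n` is independent of `M` and the preference sequences, and that mean is
`E[α_ni]` because `M` is independent of `(M_i^k)_k`, which is distributed as `(M^k)_k`. -/

namespace ProbabilityTheory

variable {Ω α β : Type*} [MeasurableSpace Ω] [MeasurableSpace α] [MeasurableSpace β]
  {P : Measure Ω} [IsFiniteMeasure P] {X : Ω → α} {Y : Ω → β}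

lemma IndepFun.measure_preimage_eq_lintegral (hXY : IndepFun X Y P) (hX : Measurable X)
    (hY : Measurable Y) {T : Set (α × β)} (hT : MeasurableSet T) :
    P ((fun ω => (X ω, Y ω)) ⁻¹' T) = ∫⁻ ω, P ((fun ω' => (X ω, Y ω')) ⁻¹' T) ∂P := by
  rw [← Measure.map_apply (hX.prodMk hY) hT,
    (indepFun_iff_map_prod_eq_prod_map_map hX.aemeasurable hY.aemeasurable).1 hXY,
    Measure.prod_apply hT, lintegral_map (measurable_measure_prodMk_left hT) hX]
  simp_rw [Measure.map_apply hY (measurable_prodMk_left hT)]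
  rfl

end ProbabilityTheory

namespace Finset

variable {α : Type*} [DecidableEq α]

def uniformWeight (i : α) (t : Finset α) : ℝ := if i ∈ t then 1 / #t else 0

lemma uniformWeight_nonneg (i : α) (t : Finset α) : 0 ≤ uniformWeight i t := by
  unfold uniformWeight; split_ifs <;> positivity

lemma uniformWeight_le_one (i : α) (t : Finset α) : uniformWeight i t ≤ 1 := by
  unfold uniformWeight
  split_ifs with h
  · exact div_le_one_of_le₀ (by exact_mod_cast card_pos.2 ⟨i, h⟩) (Nat.cast_nonneg _)
  · exact zero_le_one

lemma one_div_card_mul_sum_eq_sum_uniformWeight_mul {t s : Finset α} (h : t ⊆ s)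
    (f : α → ℝ) : 1 / #t * ∑ i ∈ t, f i = ∑ i ∈ s, uniformWeight i t * f i := by
  simp only [uniformWeight, ite_mul, zero_mul, sum_ite_mem, inter_eq_right.2 h, mul_sum]

lemma ite_one_div_card_le_of_subset {L R : Finset α} (h : L ⊆ R) :
    (if L = ∅ then (0 : ℝ) else 1 / #L) ≤ 2 * (1 / #R) + 2 * (1 / #R * #(R \ L)) := by
  split_ifs with hL
  · positivity
  have ha : (1 : ℝ) ≤ #L := by exact_mod_cast card_pos.2 (nonempty_iff_ne_empty.2 hL)
  have hR : (#R : ℝ) = #L + #(R \ L) := by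
    rw [← card_sdiff_add_card_eq_card h]; push_cast; ring
  have hb : (0 : ℝ) ≤ #(R \ L) := Nat.cast_nonneg _
  rw [hR]
  generalize (#L : ℝ) = a, (#(R \ L) : ℝ) = b at ha hb ⊢
  calc 1 / a ≤ (2 + 2 * b) / (a + b) := by
        rw [div_le_div_iff₀ (by positivity) (by positivity)]; nlinarith
    _ = 2 * (1 / (a + b)) + 2 * (1 / (a + b) * b) := by ring

end Finset

namespace Collab

variable {d : ℕ} {s : ℝ} {Ω : Type}
    {X : Ω → Vec d} {Y : Ω → ℝ} {M : Ω → Finset (Fin d)}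
    {Xi : ℕ → Ω → Vec d} {Yi : ℕ → Ω → ℝ}
    {Mi : ℕ → ℕ → Ω → Finset (Fin d)} {Mgen : ℕ → Ω → Finset (Fin d)}
    {R : ℕ → Ω → Finset ℕ}

def uncovered (M : Ω → Finset (Fin d)) (Mi : ℕ → ℕ → Ω → Finset (Fin d)) (n i : ℕ) : Set Ω :=
  {ω | ¬ M ω ⊆ Mi i (n + 1 - i) ω}

lemma card_sdiff_Lset_le_sum_indicator_uncovered {n : ℕ} {ω : Ω}
    (hR : R n ω ⊆ Icc 1 n) :
    (#(R n ω \ Lset M Mi R n ω) : ℝ) ≤ ∑ i ∈ R n ω, (uncovered M Mi n i).indicator 1 ω := by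
  classical
  have h_mem : ∀ i ∈ R n ω \ Lset M Mi R n ω, ω ∈ uncovered M Mi n i := by
    intro i hi hcov
    obtain ⟨hiR, hiL⟩ := mem_sdiff.1 hi
    exact hiL (mem_filter.2 ⟨hiR, n, (mem_Icc.1 (hR hiR)).2, le_rfl, hcov⟩)
  calc (#(R n ω \ Lset M Mi R n ω) : ℝ)
      = ∑ i ∈ R n ω \ Lset M Mi R n ω, (uncovered M Mi n i).indicator 1 ω := by
        rw [sum_congr rfl fun i hi => Set.indicator_of_mem (h_mem i hi) 1]; simp
    _ ≤ ∑ i ∈ R n ω, (uncovered M Mi n i).indicator 1 ω :=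
        sum_le_sum_of_subset_of_nonneg sdiff_subset fun i _ _ =>
          Set.indicator_nonneg (fun _ _ => zero_le_one) ω

lemma ite_one_div_card_Lset_le {n : ℕ} {ω : Ω} (hR : R n ω ⊆ Icc 1 n) :
    (if Lset M Mi R n ω = ∅ then (0 : ℝ) else 1 / #(Lset M Mi R n ω)) ≤
      2 * (1 / #(R n ω)) +
        2 * (1 / #(R n ω) * ∑ i ∈ R n ω, (uncovered M Mi n i).indicator 1 ω) := by
  classical
  refine (ite_one_div_card_le_of_subset (filter_subset _ _)).trans ?_
  gcongr
  exact card_sdiff_Lset_le_sum_indicator_uncovered hR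

lemma measurableSet_not_subset {α β : Type*} [Countable α] [MeasurableSpace β]
    {f g : β → Finset α} (hf : Measurable f) (hg : Measurable g) :
    MeasurableSet {b | ¬ f b ⊆ g b} :=
  hf.prodMk hg (Set.to_countable {p : Finset α × Finset α | ¬ p.1 ⊆ p.2}).measurableSet

variable [MeasurableSpace Ω] {P : Measure Ω}

lemma indepFun_M_seq (hmodel : Model d s P X Y M Xi Yi Mi Mgen R) (i : ℕ) :
    IndepFun M (fun ω k => Mi i (k + 1) ω) P :=
  hmodel.indep.indepFun (i := .m) (j := .mseq i) Idx.noConfusion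

lemma measurableSet_uncovered (hmodel : Model d s P X Y M Xi Yi Mi Mgen R) (n i : ℕ) :
    MeasurableSet (uncovered M Mi n i) :=
  measurableSet_not_subset hmodel.meas_M (hmodel.meas_Mi i (n + 1 - i))

lemma integrable_indicator_uncovered (hmodel : Model d s P X Y M Xi Yi Mi Mgen R) (n i : ℕ) :
    Integrable ((uncovered M Mi n i).indicator (1 : Ω → ℝ)) P :=
  have := hmodel.isProb
  (integrable_const 1).indicator (measurableSet_uncovered hmodel n i)

lemma measure_uncovered (hmodel : Model d s P X Y M Xi Yi Mi Mgen R) {n i : ℕ}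
    (hi : 1 ≤ i) (hin : i ≤ n) :
    P (uncovered M Mi n i) = ∫⁻ ω, P {ω' | ¬ M ω ⊆ Mgen (n + 1 - i) ω'} ∂P := by
  have := hmodel.isProb
  have h_seq : Measurable fun ω k => Mi i (k + 1) ω :=
    measurable_pi_lambda _ fun k => hmodel.meas_Mi i (k + 1)
  have h_gen : Measurable fun ω k => Mgen (k + 1) ω :=
    measurable_pi_lambda _ fun k => hmodel.meas_Mgen (k + 1)
  have hT : MeasurableSet {p : Finset (Fin d) × (ℕ → Finset (Fin d)) | ¬ p.1 ⊆ p.2 (n - i)} :=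
    measurableSet_not_subset (by fun_prop) (by fun_prop)
  have h_pre : uncovered M Mi n i =
      (fun ω => (M ω, fun k => Mi i (k + 1) ω)) ⁻¹' {p | ¬ p.1 ⊆ p.2 (n - i)} := by
    ext ω; simp [uncovered, Nat.sub_add_comm hin]
  rw [h_pre, (indepFun_M_seq hmodel i).measure_preimage_eq_lintegral hmodel.meas_M h_seq hT]
  refine lintegral_congr fun ω => ?_
  have hA : MeasurableSet {f : ℕ → Finset (Fin d) | ¬ M ω ⊆ f (n - i)} :=
    measurableSet_not_subset measurable_const (by fun_prop)
  have h_law := congrArg (fun μ => μ {f | ¬ M ω ⊆ f (n - i)}) (hmodel.ident_seq i hi)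
  simp only [Measure.map_apply h_seq hA, Measure.map_apply h_gen hA] at h_law
  simpa [Nat.sub_add_comm hin] using h_law

lemma integral_alphaF (hmodel : Model d s P X Y M Xi Yi Mi Mgen R) {n i : ℕ}
    (hi : 1 ≤ i) (hin : i ≤ n) :
    ∫ ω, alphaF P M Mgen n i ω ∂P = P.real (uncovered M Mi n i) := by
  have := hmodel.isProb
  have h_meas : Measurable fun ω => P {ω' | ¬ M ω ⊆ Mgen (n + 1 - i) ω'} :=
    (measurable_of_countable fun m => P {ω' | ¬ m ⊆ Mgen (n + 1 - i) ω'}).comp hmodel.meas_M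
  rw [measureReal_def, measure_uncovered hmodel hi hin,
    ← integral_toReal h_meas.aemeasurable (ae_of_all _ fun _ => measure_lt_top _ _)]
  rfl

lemma integral_uniformWeight_mul_indicator_uncovered
    (hmodel : Model d s P X Y M Xi Yi Mi Mgen R) {n i : ℕ} (hi : 1 ≤ i) (hin : i ≤ n) :
    ∫ ω, uniformWeight i (R n ω) * (uncovered M Mi n i).indicator 1 ω ∂P =
      ∫ ω, uniformWeight i (R n ω) * ∫ ω', alphaF P M Mgen n i ω' ∂P ∂P := by
  have := hmodel.isProb
  have h_weight : Measurable fun ω => uniformWeight i (R n ω) :=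
    (measurable_of_countable (uniformWeight i)).comp (hmodel.meas_R n)
  have hT : MeasurableSet
      {p : Finset (Fin d) × (ℕ → ℕ → Finset (Fin d)) | ¬ p.1 ⊆ p.2 i (n - i)} :=
    measurableSet_not_subset (by fun_prop) (by fun_prop)
  have h_ind : (uncovered M Mi n i).indicator (1 : Ω → ℝ) =
      {p : Finset (Fin d) × (ℕ → ℕ → Finset (Fin d)) | ¬ p.1 ⊆ p.2 i (n - i)}.indicator
        (1 : Finset (Fin d) × (ℕ → ℕ → Finset (Fin d)) → ℝ) ∘
        fun ω => (M ω, fun j m => Mi j (m + 1) ω) := by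
    ext ω; simp [Set.indicator, uncovered, Nat.sub_add_comm hin]
  have h_indep : IndepFun (fun ω => uniformWeight i (R n ω))
      ((uncovered M Mi n i).indicator (1 : Ω → ℝ)) P := by
    rw [h_ind]
    exact (hmodel.indep_R n).comp (measurable_of_countable (uniformWeight i))
      (measurable_one.indicator hT)
  rw [h_indep.integral_fun_mul_eq_mul_integral, integral_indicator_one
    (measurableSet_uncovered hmodel n i), integral_alphaF hmodel hi hin, integral_mul_const]
  · exact h_weight.aestronglyMeasurable
  · exact (integrable_indicator_uncovered hmodel n i).aestronglyMeasurable

lemma integrable_uniformWeight_mul (hmodel : Model d s P X Y M Xi Yi Mi Mgen R) {f : Ω → ℝ}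
    (hf : Integrable f P) (n i : ℕ) : Integrable (fun ω => uniformWeight i (R n ω) * f ω) P :=
  hf.bdd_mul
    ((measurable_of_countable (uniformWeight i)).comp (hmodel.meas_R n)).aestronglyMeasurable
    (ae_of_all _ fun ω => by
      rw [Real.norm_of_nonneg (uniformWeight_nonneg _ _)]; exact uniformWeight_le_one _ _)

lemma integrable_one_div_card_mul_sum (hmodel : Model d s P X Y M Xi Yi Mi Mgen R)
    {f : ℕ → Ω → ℝ} (hf : ∀ i, Integrable (f i) P) (n : ℕ) :
    Integrable (fun ω => 1 / (#(R n ω) : ℝ) * ∑ i ∈ R n ω, f i ω) P := by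
  simp_rw [one_div_card_mul_sum_eq_sum_uniformWeight_mul (hmodel.R_sub n _)]
  exact integrable_finsetSum _ fun i _ => integrable_uniformWeight_mul hmodel (hf i) n i

lemma integral_mean_indicator_uncovered (hmodel : Model d s P X Y M Xi Yi Mi Mgen R) (n : ℕ) :
    ∫ ω, 1 / (#(R n ω) : ℝ) * ∑ i ∈ R n ω, (uncovered M Mi n i).indicator 1 ω ∂P =
      ∫ ω, 1 / (#(R n ω) : ℝ) * ∑ i ∈ R n ω, (∫ ω', alphaF P M Mgen n i ω' ∂P) ∂P := by
  have := hmodel.isProb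
  simp_rw [one_div_card_mul_sum_eq_sum_uniformWeight_mul (hmodel.R_sub n _)]
  rw [integral_finsetSum _ fun i _ => integrable_uniformWeight_mul hmodel
      (integrable_indicator_uncovered hmodel n i) n i,
    integral_finsetSum _ fun i _ => integrable_uniformWeight_mul hmodel (integrable_const _) n i]
  refine sum_congr rfl fun i hi => ?_
  obtain ⟨hi1, hin⟩ := mem_Icc.1 hi
  exact integral_uniformWeight_mul_indicator_uncovered hmodel hi1 hin

/-- **Lemma 6.2, second statement.**
`E[(1/|L_n|) 1_(L_n ≠ ∅)] ≤ 2 E[1/|𝓡_n|] + 2 E[(1/|𝓡_n|) ∑_(i ∈ 𝓡_n) E α_ni]`. -/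
theorem statement6
    {d : ℕ} {s : ℝ} {Ω : Type} [MeasurableSpace Ω] {P : Measure Ω}
    {X : Ω → Vec d} {Y : Ω → ℝ} {M : Ω → Finset (Fin d)}
    {Xi : ℕ → Ω → Vec d} {Yi : ℕ → Ω → ℝ}
    {Mi : ℕ → ℕ → Ω → Finset (Fin d)} {Mgen : ℕ → Ω → Finset (Fin d)}
    {R : ℕ → Ω → Finset ℕ}
    (hmodel : Model d s P X Y M Xi Yi Mi Mgen R) :
    ∀ n, 1 ≤ n →
      ∫ ω, (if Lset M Mi R n ω = ∅ then 0 else 1 / ((Lset M Mi R n ω).card : ℝ)) ∂P ≤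
        2 * (∫ ω, 1 / ((R n ω).card : ℝ) ∂P) +
        2 * (∫ ω, (1 / ((R n ω).card : ℝ)) *
          ∑ i ∈ R n ω, (∫ ω', alphaF P M Mgen n i ω' ∂P) ∂P) := by
  intro n _
  have := hmodel.isProb
  have h_int_card : Integrable (fun ω => 1 / (#(R n ω) : ℝ)) P :=
    .of_bound ((measurable_of_countable fun t : Finset ℕ => 1 / (#t : ℝ)).comp
      (hmodel.meas_R n)).aestronglyMeasurable 1
      (ae_of_all _ fun ω => by
        rw [Real.norm_of_nonneg (by positivity), one_div]; exact Nat.cast_inv_le_one _)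
  have h_int_mean := integrable_one_div_card_mul_sum hmodel
    (integrable_indicator_uncovered hmodel n) n
  calc _ ≤ ∫ ω, (2 * (1 / (#(R n ω) : ℝ)) + 2 * (1 / (#(R n ω) : ℝ) *
          ∑ i ∈ R n ω, (uncovered M Mi n i).indicator 1 ω)) ∂P :=
        integral_mono_of_nonneg (ae_of_all _ fun ω => by split_ifs <;> positivity)
          ((h_int_card.const_mul 2).add (h_int_mean.const_mul 2))
          (ae_of_all _ fun ω => ite_one_div_card_Lset_le (hmodel.R_sub n ω))
    _ = _ := by
        rw [integral_add (h_int_card.const_mul 2) (h_int_mean.const_mul 2), integral_const_mul,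
          integral_const_mul, integral_mean_indicator_uncovered hmodel]

end Collab
end
end

section
/- Let d ≥ 1 be an integer and let 0 < r ≤ R. There exists a constant C > 0, depending only on d, r and R, such that for every probability measure μ on ℝ^d whose support is contained in a closed Euclidean ball of radius R, one has ∫ 1/μ(B(x,r)) μ(dx) ≤ C, where B(x,r) denotes the closed Euclidean ball centered at x of radius r. -/
/-!
Cover the closed ball of radius `R` by finitely many open balls of radius `r / 2`; by translation
invariance the number `N` of balls needed does not depend on the centre. If `x` lies in the ball
`B` of the cover, then `B ⊆ B(x, r)`, so `1 / μ(B(x, r))` is bounded by `∑_B 1_B / μ(B)`, whose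
integral is at most `N`.
-/

open MeasureTheory Metric ENNReal

lemma lintegral_indicator_inv_measure_le_one {α : Type*} [MeasurableSpace α] (μ : Measure α)
    {s : Set α} (hs : MeasurableSet s) :
    ∫⁻ x, s.indicator (fun _ ↦ (μ s)⁻¹) x ∂μ ≤ 1 := by
  rw [lintegral_indicator_const hs]
  exact ENNReal.inv_mul_le_one _

section PseudoMetric

variable {X : Type*} [PseudoMetricSpace X]

lemma ball_half_subset_closedBall_of_mem {x y : X} {r : ℝ} (hx : x ∈ ball y (r / 2)) :
    ball y (r / 2) ⊆ closedBall x r := by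
  refine (ball_subset_ball' ?_).trans ball_subset_closedBall
  rw [mem_ball] at hx
  linarith [dist_comm x y]

variable [MeasurableSpace X] {ι : Type*}

lemma inv_measure_closedBall_le_sum_indicator (μ : Measure X) {t : Finset ι} {c : ι → X}
    {r : ℝ} {x : X} (hx : x ∈ ⋃ i ∈ t, ball (c i) (r / 2)) :
    (μ (closedBall x r))⁻¹ ≤
      ∑ i ∈ t, (ball (c i) (r / 2)).indicator (fun _ ↦ (μ (ball (c i) (r / 2)))⁻¹) x := by
  obtain ⟨i, hi, hxi⟩ := Set.mem_iUnion₂.1 hx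
  calc (μ (closedBall x r))⁻¹
      ≤ (μ (ball (c i) (r / 2)))⁻¹ :=
        ENNReal.inv_le_inv' (measure_mono (ball_half_subset_closedBall_of_mem hxi))
    _ = (ball (c i) (r / 2)).indicator (fun _ ↦ (μ (ball (c i) (r / 2)))⁻¹) x :=
        (Set.indicator_of_mem hxi fun _ ↦ _).symm
    _ ≤ _ := Finset.single_le_sum (f := fun i ↦
        (ball (c i) (r / 2)).indicator (fun _ ↦ (μ (ball (c i) (r / 2)))⁻¹) x)
        (fun _ _ ↦ zero_le) hi

lemma lintegral_inv_measure_closedBall_le_card [OpensMeasurableSpace X] (μ : Measure X)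
    {s : Set X} (hμs : ∀ᵐ x ∂μ, x ∈ s) {t : Finset ι} {c : ι → X} {r : ℝ}
    (hst : s ⊆ ⋃ i ∈ t, ball (c i) (r / 2)) :
    ∫⁻ x, (μ (closedBall x r))⁻¹ ∂μ ≤ t.card :=
  calc ∫⁻ x, (μ (closedBall x r))⁻¹ ∂μ
      ≤ ∫⁻ x, ∑ i ∈ t, (ball (c i) (r / 2)).indicator
          (fun _ ↦ (μ (ball (c i) (r / 2)))⁻¹) x ∂μ :=
        lintegral_mono_ae <| hμs.mono fun x hx ↦
          inv_measure_closedBall_le_sum_indicator μ (hst hx)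
    _ = ∑ i ∈ t, ∫⁻ x, (ball (c i) (r / 2)).indicator
          (fun _ ↦ (μ (ball (c i) (r / 2)))⁻¹) x ∂μ :=
        lintegral_finsetSum _ fun _ _ ↦ measurable_const.indicator measurableSet_ball
    _ ≤ ∑ _i ∈ t, 1 :=
        Finset.sum_le_sum fun _ _ ↦ lintegral_indicator_inv_measure_le_one μ measurableSet_ball
    _ = t.card := by simp

end PseudoMetric

lemma exists_finset_closedBall_subset_iUnion_ball_add {E : Type*} [SeminormedAddCommGroup E]
    [ProperSpace E] (R : ℝ) {ε : ℝ} (hε : 0 < ε) :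
    ∃ t : Finset E, ∀ x₀ : E, closedBall x₀ R ⊆ ⋃ y ∈ t, ball (x₀ + y) ε := by
  obtain ⟨t, ht⟩ := (isCompact_closedBall (0 : E) R).elim_finite_subcover
    (fun y ↦ ball y ε) (fun _ ↦ isOpen_ball) fun x _ ↦ Set.mem_iUnion.2 ⟨x, mem_ball_self hε⟩
  refine ⟨t, fun x₀ x hx ↦ ?_⟩
  have hx' : x - x₀ ∈ closedBall 0 R := by
    rwa [mem_closedBall, dist_sub_eq_dist_add_left, zero_add]
  obtain ⟨y, hy, hxy⟩ := Set.mem_iUnion₂.1 (ht hx')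
  refine Set.mem_iUnion₂.2 ⟨y, hy, ?_⟩
  rwa [mem_ball, dist_sub_eq_dist_add_left, add_comm] at hxy

theorem statement9_general (d : ℕ) (r R : ℝ) (hr : 0 < r) :
    ∃ C : ℝ, 0 < C ∧ ∀ μ : Measure (EuclideanSpace ℝ (Fin d)), IsProbabilityMeasure μ →
      (∃ x₀, μ (Metric.closedBall x₀ R) = 1) →
      ∫⁻ x, (μ (Metric.closedBall x r))⁻¹ ∂μ ≤ ENNReal.ofReal C := by
  obtain ⟨t, ht⟩ :=
    exists_finset_closedBall_subset_iUnion_ball_add (E := EuclideanSpace ℝ (Fin d)) R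
      (half_pos hr)
  refine ⟨t.card + 1, by positivity, fun μ _ ⟨x₀, hx₀⟩ ↦ ?_⟩
  have hμ : ∀ᵐ x ∂μ, x ∈ closedBall x₀ R :=
    (mem_ae_iff_prob_eq_one measurableSet_closedBall).2 hx₀
  calc ∫⁻ x, (μ (closedBall x r))⁻¹ ∂μ
      ≤ t.card := lintegral_inv_measure_closedBall_le_card μ hμ (ht x₀)
    _ ≤ ENNReal.ofReal (t.card + 1) := by
        rw [ENNReal.ofReal_add (by positivity) zero_le_one, ENNReal.ofReal_natCast]
        exact le_self_add

/-- **Lemma 6.4 (Devroye–Györfi–Lugosi, Lemma 10.2).** For `0 < r ≤ R` there is a constant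
`C > 0`, depending only on `d`, `r` and `R`, such that every Borel probability measure `μ`
on `ℝ^d` whose support is contained in a closed Euclidean ball of radius `R` (i.e. some
closed ball of radius `R` has full measure) satisfies `∫ 1/μ(B(x,r)) μ(dx) ≤ C`. -/
theorem statement9 (d : ℕ) (hd : 1 ≤ d) (r R : ℝ) (hr : 0 < r) (hrR : r ≤ R) :
    ∃ C : ℝ, 0 < C ∧ ∀ μ : Measure (EuclideanSpace ℝ (Fin d)), IsProbabilityMeasure μ →
      (∃ x₀, μ (Metric.closedBall x₀ R) = 1) →
      ∫⁻ x, (μ (Metric.closedBall x r))⁻¹ ∂μ ≤ ENNReal.ofReal C :=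
  statement9_general d r R hr
end

section
/- Let x*, X* be vectors in ℝ^d with ⟨x*, X*⟩ > 0, and let Y > 0 be a real number. Then the function f(y) = (⟨x*, X*⟩ + yY) / ( √(‖x*‖² + y²) · √(‖X*‖² + Y²) ), defined for y > 0 (the cosine similarity in ℝ^{d+1} between the concatenated vectors (x*, y) and (X*, Y)), attains its maximum over y ∈ (0, ∞) uniquely at y = ‖x*‖² Y / ⟨x*, X*⟩, which equals ‖x*‖ Y / ( ‖X*‖ cos(x*, X*) ) where cos(x*, X*) = ⟨x*, X*⟩/(‖x*‖ ‖X*‖). -/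
open scoped RealInnerProductSpace

lemma aux13 (a n Y y : ℝ) (ha : 0 < a) (hn : 0 < n) (hY : 0 < Y) (hy : 0 < y)
    (hne : y ≠ n * Y / a) :
    (a + y * Y) / Real.sqrt (n + y ^ 2) <
      (a + (n * Y / a) * Y) / Real.sqrt (n + (n * Y / a) ^ 2) := by
  have hS1 : 0 < Real.sqrt (n + y ^ 2) := Real.sqrt_pos.2 (by positivity)
  have hS2 : 0 < Real.sqrt (n + (n * Y / a) ^ 2) := Real.sqrt_pos.2 (by positivity)
  rw [div_lt_div_iff₀ hS1 hS2]
  apply lt_of_pow_lt_pow_left₀ 2 (by positivity)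
  rw [mul_pow, mul_pow, Real.sq_sqrt (by positivity), Real.sq_sqrt (by positivity)]
  have hkey : 0 < (a * y - n * Y) ^ 2 := by
    have h0 : a * y - n * Y ≠ 0 := by
      intro h
      apply hne
      field_simp
      linarith
    positivity
  have ha' : a ≠ 0 := ne_of_gt ha
  have hexp : (a + n * Y / a * Y) ^ 2 * (n + y ^ 2) - (a + y * Y) ^ 2 * (n + (n * Y / a) ^ 2)
      = (a ^ 2 + n * Y ^ 2) * (a * y - n * Y) ^ 2 / a ^ 2 := by
    field_simp
    ring
  nlinarith [hexp, div_pos (mul_pos (show (0:ℝ) < a ^ 2 + n * Y ^ 2 by positivity) hkey)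
    (show (0:ℝ) < a ^ 2 by positivity)]

/-- **The cosine-optimal rating.** For `x*, X* ∈ ℝ^d` with `⟨x*, X*⟩ > 0` and `Y > 0`, the
cosine similarity in `ℝ^(d+1)` between the concatenations `(x*, y)` and `(X*, Y)`, namely
`f(y) = (⟨x*,X*⟩ + yY)/(√(‖x*‖² + y²) √(‖X*‖² + Y²))`, attains its maximum on `(0,∞)`
uniquely at `y₀ = ‖x*‖² Y / ⟨x*,X*⟩ = ‖x*‖ Y / (‖X*‖ cos(x*,X*))`. -/
theorem statement13 (d : ℕ) (x X : EuclideanSpace ℝ (Fin d)) (Y : ℝ)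
    (hxX : 0 < ⟪x, X⟫) (hY : 0 < Y) :
    (∀ y : ℝ, 0 < y → y ≠ ‖x‖ ^ 2 * Y / ⟪x, X⟫ →
      (⟪x, X⟫ + y * Y) / (Real.sqrt (‖x‖ ^ 2 + y ^ 2) * Real.sqrt (‖X‖ ^ 2 + Y ^ 2)) <
        (⟪x, X⟫ + (‖x‖ ^ 2 * Y / ⟪x, X⟫) * Y) /
          (Real.sqrt (‖x‖ ^ 2 + (‖x‖ ^ 2 * Y / ⟪x, X⟫) ^ 2) *
            Real.sqrt (‖X‖ ^ 2 + Y ^ 2))) ∧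
    ‖x‖ ^ 2 * Y / ⟪x, X⟫ = ‖x‖ * Y / (‖X‖ * (⟪x, X⟫ / (‖x‖ * ‖X‖))) := by
  have hx0 : x ≠ 0 := by
    rintro rfl
    simp at hxX
  have hX0 : X ≠ 0 := by
    rintro rfl
    simp at hxX
  have hxn : 0 < ‖x‖ := norm_pos_iff.2 hx0
  have hXn : 0 < ‖X‖ := norm_pos_iff.2 hX0
  constructor
  · intro y hy hne
    have hB : 0 < Real.sqrt (‖X‖ ^ 2 + Y ^ 2) := Real.sqrt_pos.2 (by positivity)
    rw [← div_div, ← div_div]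
    exact div_lt_div_of_pos_right
      (aux13 ⟪x, X⟫ (‖x‖ ^ 2) Y y hxX (by positivity) hY hy hne) hB
  · set a := ⟪x, X⟫ with ha
    have h1 : ‖X‖ * (a / (‖x‖ * ‖X‖)) = a / ‖x‖ := by
      field_simp
    rw [h1, div_div_eq_mul_div]
    ring
end

section
/- For every integer m ≥ 2 there exists a constant C > 0, depending only on m, such that for every Borel probability measure ν on ℝ^m whose support is contained in the unit sphere {x ∈ ℝ^m : ‖x‖ = 1}, every integer n ≥ 1 and every ε ∈ (0, 1], one has ∫ (1 − ν(B(x, √(2ε))))^n ν(dx) ≤ C / ( n ε^{(m−1)/2} ), where B(x, r) denotes the closed Euclidean ball centered at x of radius r. -/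
open MeasureTheory Metric Set Finset

-- maximal separated net in a compact set
lemma exists_net {α : Type*} [MetricSpace α] {s : Set α} (hs : IsCompact s) {r : ℝ}
    (hr : 0 < r) : ∃ T : Finset α, ↑T ⊆ s ∧ (s ⊆ ⋃ t ∈ T, closedBall t r) ∧
      (T : Set α).Pairwise (fun x y => r ≤ dist x y) := by
  classical
  set S : Set (Set α) := {t | t ⊆ s ∧ t.Pairwise (fun x y => r ≤ dist x y)} with hS
  obtain ⟨M, hM⟩ : ∃ M, Maximal (· ∈ S) M := by
    apply zorn_subset
    intro c hcS hchain
    refine ⟨⋃₀ c, ⟨?_, ?_⟩, fun t ht => subset_sUnion_of_mem ht⟩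
    · exact sUnion_subset fun t ht => (hcS ht).1
    · intro x hx y hy hxy
      obtain ⟨a, hac, hxa⟩ := hx
      obtain ⟨b, hbc, hyb⟩ := hy
      rcases hchain.total hac hbc with h | h
      · exact (hcS hbc).2 (h hxa) hyb hxy
      · exact (hcS hac).2 hxa (h hyb) hxy
  have hMs : M ⊆ s := hM.prop.1
  have hMsep : M.Pairwise (fun x y => r ≤ dist x y) := hM.prop.2
  -- M is finite
  obtain ⟨u, hus, hufin, hucov⟩ := finite_cover_balls_of_compact hs (half_pos hr)
  have hMfin : M.Finite := by
    have : ∀ x ∈ M, ∃ c ∈ u, x ∈ ball c (r / 2) := by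
      intro x hx
      simpa using hucov (hMs hx)
    choose f hfu hfb using this
    have hinj : InjOn (fun x => if h : x ∈ M then f x h else x) M := by
      intro x hx y hy hxy
      simp only [dif_pos hx, dif_pos hy] at hxy
      by_contra hne
      have h1 := hfb x hx
      have h2 := hfb y hy
      rw [hxy] at h1
      have : dist x y < r := by
        calc dist x y ≤ dist x (f y hy) + dist (f y hy) y := dist_triangle _ _ _
        _ < r / 2 + r / 2 := by
            rw [mem_ball] at h1 h2
            exact add_lt_add h1 (by rwa [dist_comm])
        _ = r := add_halves r
      exact absurd (hMsep hx hy hne) (not_le.mpr this)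
    have : ((fun x => if h : x ∈ M then f x h else x) '' M).Finite := by
      apply hufin.subset
      rintro _ ⟨x, hx, rfl⟩
      simpa [dif_pos hx] using hfu x hx
    exact Set.Finite.of_finite_image this hinj
  refine ⟨hMfin.toFinset, by simpa using hMs, ?_, by simpa using hMsep⟩
  intro x hx
  by_contra hxc
  have hxc : ∀ t ∈ M, r < dist x t := by
    intro t ht
    by_contra hle
    exact hxc (Set.mem_iUnion₂.2 ⟨t, by simpa using ht, by simpa [dist_comm] using not_lt.mp hle⟩)
  have hxM : x ∉ M := fun h => absurd (hxc x h) (by simp [hr.le])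
  have : insert x M ∈ S := by
    constructor
    · exact Set.insert_subset hx hMs
    · intro a ha b hb hab
      rcases ha with rfl | ha
      · rcases hb with rfl | hb
        · exact absurd rfl hab
        · exact le_of_lt (hxc b hb)
        
      · rcases hb with rfl | hb
        · rw [dist_comm]; exact le_of_lt (hxc a ha)
        · exact hMsep ha hb hab
  have := hM.2 this (Set.subset_insert x M)
  exact hxM (this (Set.mem_insert x M))

lemma geom_aux {a : ℝ} (h0 : 0 ≤ a) (h1 : a ≤ 1) {n : ℕ} (hn : 1 ≤ n) :
    a * (1 - a) ^ n ≤ 1 / n := by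
  have hb0 : (0:ℝ) ≤ 1 - a := by linarith
  have key : (n + 1 : ℝ) * (a * (1 - a) ^ n) ≤ 1 := by
    have h2 : ∀ k ∈ Finset.range (n+1), a * (1-a)^n ≤ a * (1-a)^k := by
      intro k hk
      exact mul_le_mul_of_nonneg_left
        (pow_le_pow_of_le_one hb0 (by linarith) (Nat.lt_succ_iff.mp (Finset.mem_range.mp hk))) h0
    have hg := geom_sum_mul (1-a) (n+1)
    have h3 : ∑ k ∈ Finset.range (n+1), a * (1-a)^k = 1 - (1-a)^(n+1) := by
      rw [← Finset.mul_sum]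
      nlinarith [hg]
    calc (n+1:ℝ) * (a*(1-a)^n) = ∑ _k ∈ Finset.range (n+1), a*(1-a)^n := by
          rw [Finset.sum_const, Finset.card_range]; push_cast; ring
      _ ≤ ∑ k ∈ Finset.range (n+1), a*(1-a)^k := Finset.sum_le_sum h2
      _ = 1 - (1-a)^(n+1) := h3
      _ ≤ 1 := by nlinarith [pow_nonneg hb0 (n+1)]
  have hn0 : (0:ℝ) < n := by exact_mod_cast hn
  rw [le_div_iff₀ hn0]
  nlinarith [mul_nonneg h0 (pow_nonneg hb0 n)]

lemma ennreal_aux {p : ENNReal} (hp : p ≤ 1) {n : ℕ} (hn : 1 ≤ n) :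
    p * (1 - p) ^ n ≤ ENNReal.ofReal (1 / n) := by
  have hpt : p ≠ ⊤ := (hp.trans_lt ENNReal.one_lt_top).ne
  set a := p.toReal with ha
  have h0 : 0 ≤ a := ENNReal.toReal_nonneg
  have h1 : a ≤ 1 := by
    rw [ha, ← ENNReal.toReal_one]
    exact ENNReal.toReal_mono ENNReal.one_ne_top hp
  have hp' : p = ENNReal.ofReal a := (ENNReal.ofReal_toReal hpt).symm
  have h1p : (1 : ENNReal) - p = ENNReal.ofReal (1 - a) := by
    rw [hp', ← ENNReal.ofReal_one, ← ENNReal.ofReal_sub _ h0]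
  rw [h1p, hp', ← ENNReal.ofReal_pow (by linarith), ← ENNReal.ofReal_mul h0]
  exact ENNReal.ofReal_le_ofReal (geom_aux h0 h1 hn)

lemma pow_diff_aux {u : ℝ} (h0 : 0 ≤ u) (h1 : u ≤ 1) (m : ℕ) :
    (1 + u) ^ m - (1 - u) ^ m ≤ m * 2 ^ m * u := by
  have hg := geom_sum₂_mul (1 + u) (1 - u) m
  have hsum : ∑ i ∈ Finset.range m, (1+u) ^ i * (1-u) ^ (m - 1 - i) ≤ m * 2 ^ (m-1) := by
    calc ∑ i ∈ Finset.range m, (1+u) ^ i * (1-u) ^ (m - 1 - i)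
        ≤ ∑ _i ∈ Finset.range m, (2:ℝ) ^ (m-1) := by
          apply Finset.sum_le_sum
          intro i hi
          have hA : (1+u)^i ≤ 2^(m-1) := by
            calc (1+u)^i ≤ 2^i := pow_le_pow_left₀ (by linarith) (by linarith) i
            _ ≤ 2^(m-1) := pow_le_pow_right₀ (by norm_num)
                  (by have := Finset.mem_range.mp hi; omega)
          have hB : (1-u)^(m-1-i) ≤ 1 := pow_le_one₀ (by linarith) (by linarith)
          calc (1+u)^i * (1-u)^(m-1-i) ≤ 2^(m-1) * 1 :=
                mul_le_mul hA hB (pow_nonneg (by linarith) _) (by positivity)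
          _ = 2^(m-1) := mul_one _
      _ = m * 2 ^ (m-1) := by rw [Finset.sum_const, Finset.card_range]; push_cast; ring
  have h2u : (1 + u) - (1 - u) = 2 * u := by ring
  rw [← hg, h2u]
  calc (∑ i ∈ Finset.range m, (1+u) ^ i * (1-u) ^ (m - 1 - i)) * (2 * u)
      ≤ (m * 2 ^ (m-1)) * (2 * u) :=
        mul_le_mul_of_nonneg_right hsum (by positivity)
    _ ≤ m * 2 ^ m * u := by
        rcases Nat.eq_zero_or_pos m with hm0 | hm0
        · subst hm0; norm_num
        · have hme : m - 1 + 1 = m := by omega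
          have : (2:ℝ) ^ m = 2 ^ (m-1) * 2 := by rw [← pow_succ, hme]
          rw [this]; ring_nf; nlinarith [pow_nonneg (show (0:ℝ) ≤ 2 by norm_num) (m-1),
            Nat.cast_nonneg (α := ℝ) m]

lemma card_bound (m : ℕ) (hm : 2 ≤ m) {r : ℝ} (hr : 0 < r) (hr1 : r ≤ 1)
    (T : Finset (EuclideanSpace ℝ (Fin m)))
    (hTs : ↑T ⊆ sphere (0 : EuclideanSpace ℝ (Fin m)) 1)
    (hsep : (T : Set (EuclideanSpace ℝ (Fin m))).Pairwise (fun x y => r ≤ dist x y)) :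
    (T.card : ℝ) * (r/2)^m ≤ m * 2^m * (r/2) := by
  let E := EuclideanSpace ℝ (Fin m)
  haveI : Nontrivial (EuclideanSpace ℝ (Fin m)) := Module.nontrivial_of_finrank_pos (R := ℝ)
    (by rw [finrank_euclideanSpace_fin]; omega)
  set u : ℝ := r / 2 with hu
  have hu0 : 0 < u := by positivity
  have hu1 : u ≤ 1 := by rw [hu]; linarith
  set μ : Measure (EuclideanSpace ℝ (Fin m)) := volume with hμ
  set V : ENNReal := μ (ball (0:EuclideanSpace ℝ (Fin m)) 1) with hV
  have hV0 : V ≠ 0 := (measure_ball_pos μ _ one_pos).ne'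
  have hVt : V ≠ ⊤ := measure_ball_lt_top.ne
  have hfr : Module.finrank ℝ (EuclideanSpace ℝ (Fin m)) = m := finrank_euclideanSpace_fin
  -- disjoint balls
  have hdisj : (T : Set (EuclideanSpace ℝ (Fin m))).PairwiseDisjoint (fun t => ball t u) := by
    intro x hx y hy hxy
    apply ball_disjoint_ball
    calc u + u = r := by rw [hu]; ring
    _ ≤ dist x y := hsep hx hy hxy
  have hsub : ∀ t ∈ T, ball t u ⊆ closedBall (0:EuclideanSpace ℝ (Fin m)) (1+u) \ ball (0:EuclideanSpace ℝ (Fin m)) (1-u) := by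
    intro t ht y hy
    have htn : dist t (0:EuclideanSpace ℝ (Fin m)) = 1 := by simpa [mem_sphere] using hTs ht
    rw [mem_ball] at hy
    constructor
    · rw [mem_closedBall]
      calc dist y 0 ≤ dist y t + dist t 0 := dist_triangle _ _ _
      _ ≤ u + 1 := by rw [htn]; linarith
      _ = 1 + u := by ring
    · rw [mem_ball, not_lt]
      calc 1 - u = dist t 0 - u := by rw [htn]
      _ ≤ dist t 0 - dist y t := by linarith
      _ ≤ dist y 0 := by
          have := dist_triangle t y (0:EuclideanSpace ℝ (Fin m))
          rw [dist_comm y t]; linarith [dist_comm t y]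
  have hmeas : ∑ t ∈ T, μ (ball t u) ≤ μ (closedBall (0:EuclideanSpace ℝ (Fin m)) (1+u) \ ball (0:EuclideanSpace ℝ (Fin m)) (1-u)) := by
    rw [← measure_biUnion_finset hdisj (fun t _ => measurableSet_ball)]
    apply measure_mono
    exact Set.iUnion₂_subset hsub
  have hball : ∀ t : EuclideanSpace ℝ (Fin m), μ (ball t u) = ENNReal.ofReal (u ^ m) * V := by
    intro t
    rw [hV, hμ, Measure.addHaar_ball _ _ hu0.le, hfr]
  have hdiff : μ (closedBall (0:EuclideanSpace ℝ (Fin m)) (1+u) \ ball (0:EuclideanSpace ℝ (Fin m)) (1-u)) ≤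
      ENNReal.ofReal ((1+u)^m - (1-u)^m) * V := by
    have hss : ball (0:EuclideanSpace ℝ (Fin m)) (1-u) ⊆ closedBall (0:EuclideanSpace ℝ (Fin m)) (1+u) :=
      (ball_subset_ball (by linarith)).trans ball_subset_closedBall
    have hb1 : μ (ball (0:EuclideanSpace ℝ (Fin m)) (1-u)) = ENNReal.ofReal ((1-u)^m) * V := by
      rw [Measure.addHaar_ball μ _ (by linarith : (0:ℝ) ≤ 1 - u), hfr, hV]
    have hcb : μ (closedBall (0:EuclideanSpace ℝ (Fin m)) (1+u)) = ENNReal.ofReal ((1+u)^m) * V := by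
      rw [Measure.addHaar_closedBall μ _ (by linarith : (0:ℝ) ≤ 1 + u), hfr, hV]
    rw [measure_diff hss measurableSet_ball.nullMeasurableSet measure_ball_lt_top.ne, hb1, hcb,
      ENNReal.ofReal_sub _ (pow_nonneg (by linarith) m), ENNReal.sub_mul (fun _ _ => hVt)]
  have key : (T.card : ENNReal) * ENNReal.ofReal (u ^ m) * V ≤
      ENNReal.ofReal ((1+u)^m - (1-u)^m) * V := by
    calc (T.card : ENNReal) * ENNReal.ofReal (u ^ m) * V
        = ∑ t ∈ T, μ (ball t u) := by
          rw [Finset.sum_congr rfl (fun t _ => hball t), Finset.sum_const, nsmul_eq_mul,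
            mul_assoc]
      _ ≤ _ := hmeas.trans hdiff
  rw [ENNReal.mul_le_mul_iff_left hV0 hVt] at key
  have key2 : ENNReal.ofReal ((T.card : ℝ) * u ^ m) ≤ ENNReal.ofReal (m * 2^m * u) := by
    calc ENNReal.ofReal ((T.card : ℝ) * u ^ m)
        = (T.card : ENNReal) * ENNReal.ofReal (u ^ m) := by
          rw [ENNReal.ofReal_mul (by positivity), ENNReal.ofReal_natCast]
      _ ≤ ENNReal.ofReal ((1+u)^m - (1-u)^m) := key
      _ ≤ ENNReal.ofReal (m * 2^m * u) :=
          ENNReal.ofReal_le_ofReal (pow_diff_aux hu0.le hu1 m)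
  rw [ENNReal.ofReal_le_ofReal_iff (by positivity)] at key2
  exact key2

/-- **Key estimate in the proof of Lemma 6.6.** For every `m ≥ 2` there is a constant
`C > 0` depending only on `m` such that for every Borel probability measure `ν` on `ℝ^m`
supported on the unit sphere, every `n ≥ 1` and every `ε ∈ (0, 1]`,
`∫ (1 − ν(B(x, √(2ε))))^n ν(dx) ≤ C / (n ε^((m−1)/2))`. -/
theorem statement14 (m : ℕ) (hm : 2 ≤ m) :
    ∃ C : ℝ, 0 < C ∧ ∀ ν : Measure (EuclideanSpace ℝ (Fin m)), IsProbabilityMeasure ν →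
      ν (Metric.sphere 0 1) = 1 → ∀ n : ℕ, 1 ≤ n → ∀ ε : ℝ, 0 < ε → ε ≤ 1 →
      ∫⁻ x, (1 - ν (Metric.closedBall x (Real.sqrt (2 * ε)))) ^ n ∂ν ≤
        ENNReal.ofReal (C / (n * ε ^ (((m : ℝ) - 1) / 2))) := by
  have hm0 : (0:ℝ) < m := by exact_mod_cast (by omega : 0 < m)
  refine ⟨m * 8 ^ m, mul_pos hm0 (by positivity), ?_⟩
  intro ν hν hνs n hn ε hε hε1
  set p : ℝ := ((m : ℝ) - 1) / 2 with hp
  have hp0 : 0 ≤ p := by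
    rw [hp]
    have : (2:ℝ) ≤ m := by exact_mod_cast hm
    linarith
  set r : ℝ := Real.sqrt (2 * ε) / 2 with hrdef
  have hsq0 : 0 < Real.sqrt (2 * ε) := Real.sqrt_pos.mpr (by linarith)
  have hr0 : 0 < r := by rw [hrdef]; linarith
  have hr1 : r ≤ 1 := by
    rw [hrdef]
    have h4 : Real.sqrt (2 * ε) ≤ Real.sqrt 4 := Real.sqrt_le_sqrt (by linarith)
    rw [show (4:ℝ) = 2^2 by norm_num, Real.sqrt_sq (by norm_num)] at h4
    linarith
  obtain ⟨T, hTs, hTcov, hTsep⟩ :=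
    exists_net (isCompact_sphere (0 : EuclideanSpace ℝ (Fin m)) 1) hr0
  -- Step 1: integral bound by card * 1/n
  have hstep : ∫⁻ x, (1 - ν (closedBall x (Real.sqrt (2 * ε)))) ^ n ∂ν ≤
      (T.card : ENNReal) * ENNReal.ofReal (1 / n) := by
    set f : EuclideanSpace ℝ (Fin m) → ENNReal :=
      fun x => (1 - ν (closedBall x (Real.sqrt (2 * ε)))) ^ n with hf
    have hcompl : ν (sphere (0 : EuclideanSpace ℝ (Fin m)) 1)ᶜ = 0 := by
      rw [measure_compl isClosed_sphere.measurableSet (measure_ne_top ν _), hνs, measure_univ,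
        tsub_self]
    have hone : ∀ t ∈ T, ∫⁻ x in closedBall t r, f x ∂ν ≤ ENNReal.ofReal (1 / n) := by
      intro t ht
      have hb : ∀ x ∈ closedBall t r, f x ≤ (1 - ν (closedBall t r)) ^ n := by
        intro x hx
        have hsub2 : closedBall t r ⊆ closedBall x (Real.sqrt (2 * ε)) := by
          intro y hy
          rw [mem_closedBall] at hx hy ⊢
          calc dist y x ≤ dist y t + dist t x := dist_triangle _ _ _
          _ ≤ r + r := add_le_add hy (by rwa [dist_comm])
          _ = Real.sqrt (2 * ε) := by rw [hrdef]; ring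
        exact pow_le_pow_left' (tsub_le_tsub_left (measure_mono hsub2) 1) n
      calc ∫⁻ x in closedBall t r, f x ∂ν
          ≤ ∫⁻ _x in closedBall t r, (1 - ν (closedBall t r)) ^ n ∂ν :=
            setLIntegral_mono' measurableSet_closedBall hb
        _ = (1 - ν (closedBall t r)) ^ n * ν (closedBall t r) := setLIntegral_const _ _
        _ = ν (closedBall t r) * (1 - ν (closedBall t r)) ^ n := mul_comm _ _
        _ ≤ ENNReal.ofReal (1 / n) := ennreal_aux prob_le_one hn
    calc ∫⁻ x, f x ∂ν
        = ∫⁻ x in sphere (0 : EuclideanSpace ℝ (Fin m)) 1, f x ∂ν +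
          ∫⁻ x in (sphere (0 : EuclideanSpace ℝ (Fin m)) 1)ᶜ, f x ∂ν :=
          (lintegral_add_compl f isClosed_sphere.measurableSet).symm
      _ = ∫⁻ x in sphere (0 : EuclideanSpace ℝ (Fin m)) 1, f x ∂ν := by
          rw [setLIntegral_measure_zero _ _ hcompl, add_zero]
      _ ≤ ∫⁻ x in ⋃ t ∈ T, closedBall t r, f x ∂ν := lintegral_mono_set hTcov
      _ ≤ ∑ t ∈ T, ∫⁻ x in closedBall t r, f x ∂ν := by
          have hun : (⋃ t ∈ T, closedBall t r) = ⋃ t : {t // t ∈ T}, closedBall t.1 r := by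
            ext x; simp
          rw [hun]
          refine (lintegral_iUnion_le _ _).trans ?_
          rw [tsum_fintype]
          exact le_of_eq (Finset.sum_coe_sort T (fun t => ∫⁻ x in Metric.closedBall t r, f x ∂ν))
      _ ≤ ∑ _t ∈ T, ENNReal.ofReal (1 / n) := Finset.sum_le_sum hone
      _ = (T.card : ENNReal) * ENNReal.ofReal (1 / n) := by
          rw [Finset.sum_const, nsmul_eq_mul]
  -- Step 2: cardinality bound
  have hcard := card_bound m hm hr0 hr1 T hTs hTsep
  set w : ℝ := r / 2 with hw
  have hw0 : 0 < w := by rw [hw]; linarith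
  have hcard1 : (T.card : ℝ) * w ^ (m - 1) ≤ m * 2 ^ m := by
    have hpow : w ^ m = w ^ (m - 1) * w := by
      rw [← pow_succ]
      congr 1
      omega
    rw [hpow] at hcard
    have := mul_le_mul_of_nonneg_right (le_of_eq (rfl : (T.card : ℝ) * (w ^ (m-1) * w) =
      (T.card : ℝ) * (w ^ (m-1) * w))) (le_refl (0:ℝ))
    nlinarith [hcard, hw0]
  have hrpow : Real.sqrt (2 * ε) ^ (m - 1) = (2 * ε) ^ p := by
    rw [Real.sqrt_eq_rpow, ← Real.rpow_natCast ((2*ε) ^ ((1:ℝ)/2)) (m-1),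
      ← Real.rpow_mul (by linarith)]
    congr 1
    rw [hp]
    have : ((m - 1 : ℕ) : ℝ) = (m : ℝ) - 1 := by
      have h1 : 1 ≤ m := by omega
      push_cast [Nat.cast_sub h1]
      ring
    rw [this]
    ring
  have hA : ε ^ p ≤ (2 * ε) ^ p :=
    Real.rpow_le_rpow (le_of_lt hε) (by linarith) hp0
  have hA0 : 0 < ε ^ p := Real.rpow_pos_of_pos hε _
  have hwpow : ε ^ p / 4 ^ (m - 1) ≤ w ^ (m - 1) := by
    have : w ^ (m-1) = Real.sqrt (2*ε) ^ (m-1) / 4 ^ (m-1) := by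
      rw [hw, hrdef, ← div_pow]
      congr 1
      ring
    rw [this, hrpow]
    gcongr
  have hC : (T.card : ℝ) * ε ^ p ≤ m * 8 ^ m := by
    have h40 : (0:ℝ) < 4 ^ (m-1) := by positivity
    have h1 : (T.card : ℝ) * (ε ^ p / 4 ^ (m-1)) ≤ m * 2 ^ m :=
      le_trans (mul_le_mul_of_nonneg_left hwpow (Nat.cast_nonneg _)) hcard1
    have h2 : (T.card : ℝ) * ε ^ p ≤ m * 2 ^ m * 4 ^ (m-1) := by
      rw [mul_div_assoc'] at h1
      exact (div_le_iff₀ h40).mp h1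
    have h3 : (m:ℝ) * 2 ^ m * 4 ^ (m-1) ≤ m * 8 ^ m := by
      have h4 : (4:ℝ) ^ (m-1) ≤ 4 ^ m := pow_le_pow_right₀ (by norm_num) (by omega)
      have h5 : (2:ℝ) ^ m * 4 ^ m = 8 ^ m := by rw [← mul_pow]; norm_num
      have h6 : (2:ℝ) ^ m * 4 ^ (m-1) ≤ 8 ^ m := by
        calc (2:ℝ) ^ m * 4 ^ (m-1) ≤ 2 ^ m * 4 ^ m := by gcongr
        _ = 8 ^ m := h5
      nlinarith [hm0]
    linarith
  -- Final assembly
  have hn0 : (0:ℝ) < n := by exact_mod_cast hn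
  calc ∫⁻ x, (1 - ν (closedBall x (Real.sqrt (2 * ε)))) ^ n ∂ν
      ≤ (T.card : ENNReal) * ENNReal.ofReal (1 / n) := hstep
    _ = ENNReal.ofReal ((T.card : ℝ) * (1 / n)) := by
        rw [ENNReal.ofReal_mul (Nat.cast_nonneg _), ENNReal.ofReal_natCast]
    _ ≤ ENNReal.ofReal ((m : ℝ) * 8 ^ m / (n * ε ^ p)) := by
        apply ENNReal.ofReal_le_ofReal
        rw [mul_one_div, div_le_div_iff₀ hn0 (by positivity)]
        calc (T.card : ℝ) * (n * ε ^ p) = ((T.card : ℝ) * ε ^ p) * n := by ring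
        _ ≤ ((m:ℝ) * 8 ^ m) * n := mul_le_mul_of_nonneg_right hC hn0.le
end
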